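/- Let t > 0 and s ≥ 0 be real numbers, and suppose J_n(t) ≠ 0 for every n ∈ ℕ. Then the series ∑_{n=1}^∞ J_n(s)² · |H_n(t)| / |J_n(t)| converges if and only if s < t. -/

import Mathlib

open Real Filter Topology

noncomputable def expS (x : ℝ) : ℝ := ∑' p : ℕ, x ^ p / p.factorial

lemma expS_summable (x : ℝ) : Summable (fun p : ℕ => x ^ p / (p.factorial : ℝ)) :=
  Real.summable_pow_div_factorial x

lemma sum_le_expS {x : ℝ} (hx : 0 ≤ x) (s : Finset ℕ) :
    ∑ p ∈ s, x ^ p / (p.factorial : ℝ) ≤ expS x :=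
  Summable.sum_le_tsum s (fun i _ => by positivity) (expS_summable x)

lemma expS_nonneg {x : ℝ} (hx : 0 ≤ x) : 0 ≤ expS x :=
  tsum_nonneg (fun p => by positivity)

lemma abs_tsum_le' {f : ℕ → ℝ} (hf : Summable fun p => |f p|) :
    |∑' p, f p| ≤ ∑' p, |f p| := by
  have h : Summable fun p => ‖f p‖ := by
    simpa only [Real.norm_eq_abs] using hf
  have h2 := norm_tsum_le_tsum_norm h
  rw [Real.norm_eq_abs] at h2
  refine h2.trans (le_of_eq ?_)
  exact tsum_congr fun p => Real.norm_eq_abs _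

/-- Bessel function of the first kind of natural order `n`. -/
noncomputable def besselJ (n : ℕ) (t : ℝ) : ℝ :=
  ∑' p : ℕ, ((-1 : ℝ) ^ p / ((p.factorial : ℝ) * ((n + p).factorial : ℝ))) * (t / 2) ^ (n + 2 * p)

lemma fact_le_fact {a b : ℕ} (h : a ≤ b) : (a.factorial : ℝ) ≤ b.factorial := by
  exact_mod_cast Nat.factorial_le h

lemma fact_mul_fact_le (a b : ℕ) : (a.factorial : ℝ) * b.factorial ≤ ((a + b).factorial : ℝ) := by
  exact_mod_cast Nat.le_of_dvd (a + b).factorial_pos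
    (Nat.factorial_mul_factorial_dvd_factorial_add a b)

lemma besselJ_term_abs (n p : ℕ) {c : ℝ} (hc : 0 ≤ c) :
    |((-1 : ℝ) ^ p / ((p.factorial : ℝ) * ((n + p).factorial : ℝ))) * c ^ (n + 2 * p)|
      = c ^ (n + 2 * p) / ((p.factorial : ℝ) * ((n + p).factorial : ℝ)) := by
  rw [abs_mul, abs_div, abs_pow, abs_neg, abs_one, one_pow, abs_pow, abs_of_nonneg hc,
    abs_of_pos (by positivity : (0:ℝ) < (p.factorial : ℝ) * ((n + p).factorial : ℝ))]
  ring

lemma besselJ_term_bound (n p : ℕ) {c : ℝ} (hc : 0 ≤ c) :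
    c ^ (n + 2 * p) / ((p.factorial : ℝ) * ((n + p).factorial : ℝ))
      ≤ c ^ n / n.factorial * ((c ^ 2) ^ p / p.factorial) := by
  have h1 : c ^ (n + 2 * p) = c ^ n * (c ^ 2) ^ p := by
    rw [pow_add, ← pow_mul, mul_comm 2 p]
  have h2 : c ^ n / n.factorial * ((c ^ 2) ^ p / p.factorial)
      = c ^ n * (c ^ 2) ^ p / ((n.factorial : ℝ) * p.factorial) := div_mul_div_comm _ _ _ _
  rw [h1, h2]
  apply div_le_div_of_nonneg_left (by positivity) (by positivity)
  calc ((n.factorial : ℝ)) * p.factorial = (p.factorial : ℝ) * n.factorial := mul_comm _ _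
    _ ≤ (p.factorial : ℝ) * (n + p).factorial := by
        gcongr
        exact Nat.le_add_right n p

lemma besselJ_summable (n : ℕ) {x : ℝ} (hx : 0 ≤ x) :
    Summable (fun p : ℕ =>
      ((-1 : ℝ) ^ p / ((p.factorial : ℝ) * ((n + p).factorial : ℝ))) * (x / 2) ^ (n + 2 * p)) := by
  have hc : 0 ≤ x / 2 := by linarith
  have hb : Summable (fun p : ℕ => (x / 2) ^ n / n.factorial * (((x / 2) ^ 2) ^ p / p.factorial)) :=
    (expS_summable ((x / 2) ^ 2)).mul_left _
  refine Summable.of_abs (Summable.of_nonneg_of_le (fun p => abs_nonneg _) (fun p => ?_) hb)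
  rw [besselJ_term_abs n p hc]
  exact besselJ_term_bound n p hc

lemma besselJ_abs_le (n : ℕ) {x : ℝ} (hx : 0 ≤ x) :
    |besselJ n x| ≤ (x / 2) ^ n / n.factorial * expS ((x / 2) ^ 2) := by
  have hc : 0 ≤ x / 2 := by linarith
  have hs := besselJ_summable n hx
  have hb : Summable (fun p : ℕ => (x / 2) ^ n / n.factorial * (((x / 2) ^ 2) ^ p / p.factorial)) :=
    (expS_summable ((x / 2) ^ 2)).mul_left _
  have habs : Summable (fun p : ℕ =>
      |((-1 : ℝ) ^ p / ((p.factorial : ℝ) * ((n + p).factorial : ℝ))) * (x / 2) ^ (n + 2 * p)|) := by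
    refine Summable.of_nonneg_of_le (fun p => abs_nonneg _) (fun p => ?_) hb
    rw [besselJ_term_abs n p hc]
    exact besselJ_term_bound n p hc
  calc |besselJ n x| ≤ ∑' p : ℕ,
      |((-1 : ℝ) ^ p / ((p.factorial : ℝ) * ((n + p).factorial : ℝ))) * (x / 2) ^ (n + 2 * p)| := by
        exact abs_tsum_le' habs
    _ ≤ ∑' p : ℕ, (x / 2) ^ n / n.factorial * (((x / 2) ^ 2) ^ p / p.factorial) := by
        apply Summable.tsum_le_tsum _ habs hb
        intro p
        rw [besselJ_term_abs n p hc]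
        exact besselJ_term_bound n p hc
    _ = (x / 2) ^ n / n.factorial * expS ((x / 2) ^ 2) := by
        rw [tsum_mul_left]; rfl

lemma tail_term_bound (n p : ℕ) {c : ℝ} (hc : 0 ≤ c) :
    c ^ (n + 2 * (p + 1)) / (((p + 1).factorial : ℝ) * ((n + (p + 1)).factorial : ℝ))
      ≤ c ^ (n + 2) / ((n + 1).factorial : ℝ) * ((c ^ 2) ^ p / p.factorial) := by
  have h1 : c ^ (n + 2 * (p + 1)) = c ^ (n + 2) * (c ^ 2) ^ p := by
    rw [← pow_mul, ← pow_add]; ring_nf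
  have h2 : c ^ (n + 2) / ((n + 1).factorial : ℝ) * ((c ^ 2) ^ p / p.factorial)
      = c ^ (n + 2) * (c ^ 2) ^ p / (((n + 1).factorial : ℝ) * p.factorial) :=
    div_mul_div_comm _ _ _ _
  rw [h1, h2]
  apply div_le_div_of_nonneg_left (by positivity) (by positivity)
  calc ((n + 1).factorial : ℝ) * p.factorial
      ≤ ((p + 1).factorial : ℝ) * ((n + (p + 1)).factorial : ℝ) := by
        rw [mul_comm]
        apply mul_le_mul (fact_le_fact (by omega)) (fact_le_fact (by omega))
          (by positivity) (by positivity)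

lemma besselJ_sub_main (n : ℕ) {x : ℝ} (hx : 0 ≤ x) :
    |besselJ n x - (x / 2) ^ n / n.factorial|
      ≤ (x / 2) ^ (n + 2) / ((n + 1).factorial : ℝ) * expS ((x / 2) ^ 2) := by
  have hc : 0 ≤ x / 2 := by linarith
  set f : ℕ → ℝ := fun p =>
    ((-1 : ℝ) ^ p / ((p.factorial : ℝ) * ((n + p).factorial : ℝ))) * (x / 2) ^ (n + 2 * p) with hf
  have hs : Summable f := besselJ_summable n hx
  have hs1 : Summable fun p => f (p + 1) := (summable_nat_add_iff 1).2 hs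
  have hb2 : Summable (fun p : ℕ =>
      (x / 2) ^ (n + 2) / ((n + 1).factorial : ℝ) * (((x / 2) ^ 2) ^ p / p.factorial)) :=
    (expS_summable ((x / 2) ^ 2)).mul_left _
  have habs1 : Summable fun p => |f (p + 1)| := by
    refine Summable.of_nonneg_of_le (fun p => abs_nonneg _) (fun p => ?_) hb2
    rw [hf]
    rw [besselJ_term_abs n (p + 1) hc]
    exact tail_term_bound n p hc
  have hdec : besselJ n x = f 0 + ∑' p, f (p + 1) := Summable.tsum_eq_zero_add hs
  have hf0 : f 0 = (x / 2) ^ n / n.factorial := by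
    simp [hf]; ring
  have : besselJ n x - (x / 2) ^ n / n.factorial = ∑' p, f (p + 1) := by
    rw [hdec, hf0]; ring
  rw [this]
  calc |∑' p, f (p + 1)| ≤ ∑' p, |f (p + 1)| := abs_tsum_le' habs1
    _ ≤ ∑' p : ℕ, (x / 2) ^ (n + 2) / ((n + 1).factorial : ℝ) * (((x / 2) ^ 2) ^ p / p.factorial) := by
        refine Summable.tsum_le_tsum (fun p => ?_) habs1 hb2
        rw [hf, besselJ_term_abs n (p + 1) hc]
        exact tail_term_bound n p hc
    _ = (x / 2) ^ (n + 2) / ((n + 1).factorial : ℝ) * expS ((x / 2) ^ 2) := by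
        rw [tsum_mul_left]; rfl

/-- The digamma value `ψ(m+1) = -γ + ∑_{i=1}^m 1/i`. -/
noncomputable def psiNat (m : ℕ) : ℝ :=
  -Real.eulerMascheroniConstant + ∑ i ∈ Finset.range m, (1 : ℝ) / (i + 1)

lemma psiNat_abs_le (m : ℕ) : |psiNat m| ≤ |Real.eulerMascheroniConstant| + m := by
  have h0 : (0:ℝ) ≤ ∑ i ∈ Finset.range m, (1:ℝ)/(i+1) := by positivity
  have h1 : ∑ i ∈ Finset.range m, (1:ℝ)/(i+1) ≤ m := by
    calc ∑ i ∈ Finset.range m, (1:ℝ)/(i+1) ≤ ∑ _i ∈ Finset.range m, (1:ℝ) := by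
          refine Finset.sum_le_sum fun i _ => ?_
          rw [div_le_one (by positivity)]
          linarith [(Nat.cast_nonneg i : (0:ℝ) ≤ i)]
      _ = m := by simp
  unfold psiNat
  refine (abs_add_le _ _).trans ?_
  rw [abs_neg, abs_of_nonneg h0]
  linarith

lemma nat_key {k m : ℕ} (h : m ≤ k) :
    (k - m).factorial * ((k + 1) * m.factorial) ≤ (k + 1).factorial := by
  have h1 : (k - m).factorial * m.factorial ≤ k.factorial := by
    have hd := Nat.factorial_mul_factorial_dvd_factorial_add (k - m) m
    rw [Nat.sub_add_cancel h] at hd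
    exact Nat.le_of_dvd k.factorial_pos hd
  calc (k - m).factorial * ((k + 1) * m.factorial)
      = (k + 1) * ((k - m).factorial * m.factorial) := by ring
    _ ≤ (k + 1) * k.factorial := Nat.mul_le_mul_left _ h1
    _ = (k + 1).factorial := (Nat.factorial_succ k).symm

lemma fterm_le {A : ℝ} (hA : 0 < A) (k i : ℕ) (hi : i ≤ k) :
    (((k - i).factorial : ℝ) / (((i + 1).factorial : ℝ))) * A ^ ((2 * ((i:ℤ) + 1)) - ((k + 2 : ℕ) : ℤ))
      ≤ (((k + 1).factorial : ℝ) * A ^ (-((k + 2 : ℕ) : ℤ)) * A ^ 2 / (k + 1))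
          * ((A ^ 2) ^ i / i.factorial) := by
  have hz : A ^ ((2 * ((i:ℤ) + 1)) - ((k + 2 : ℕ) : ℤ))
      = (A ^ 2) ^ (i + 1) * A ^ (-((k + 2 : ℕ) : ℤ)) := by
    rw [zpow_sub₀ hA.ne', zpow_neg, div_eq_mul_inv]
    congr 1
    rw [show (2 * ((i:ℤ) + 1)) = ((2 * (i + 1) : ℕ) : ℤ) by push_cast; ring, zpow_natCast,
      pow_mul]
  have step1 : ((k - i).factorial : ℝ) / ((i + 1).factorial : ℝ)
      ≤ ((k + 1).factorial : ℝ) / (((k:ℝ) + 1) * i.factorial) := by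
    rw [div_le_div_iff₀ (by positivity) (by positivity)]
    calc ((k - i).factorial : ℝ) * (((k:ℝ) + 1) * i.factorial)
        ≤ ((k + 1).factorial : ℝ) := by exact_mod_cast nat_key hi
      _ ≤ ((k + 1).factorial : ℝ) * (i + 1).factorial :=
          le_mul_of_one_le_right (by positivity)
            (by exact_mod_cast Nat.one_le_iff_ne_zero.2 (i + 1).factorial_ne_zero)
  rw [hz, ← mul_assoc]
  calc ((k - i).factorial : ℝ) / ((i + 1).factorial : ℝ) * (A ^ 2) ^ (i + 1)
        * A ^ (-((k + 2 : ℕ) : ℤ))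
      ≤ ((k + 1).factorial : ℝ) / (((k:ℝ) + 1) * i.factorial) * (A ^ 2) ^ (i + 1)
        * A ^ (-((k + 2 : ℕ) : ℤ)) := by
        apply mul_le_mul_of_nonneg_right (mul_le_mul_of_nonneg_right step1 (by positivity))
          (by positivity)
    _ = ((k + 1).factorial : ℝ) * A ^ (-((k + 2 : ℕ) : ℤ)) * A ^ 2 / (k + 1)
          * ((A ^ 2) ^ i / i.factorial) := by
        rw [pow_succ]
        field_simp

lemma finite_sum_est {A : ℝ} (hA : 0 < A) (k : ℕ) :
    |(∑ m ∈ Finset.range (k + 2),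
        ((((k + 2) - m - 1).factorial : ℝ) / (m.factorial : ℝ))
          * A ^ (2 * (m:ℤ) - ((k + 2 : ℕ) : ℤ)))
      - ((k + 1).factorial : ℝ) * A ^ (-((k + 2 : ℕ) : ℤ))|
    ≤ ((k + 1).factorial : ℝ) * A ^ (-((k + 2 : ℕ) : ℤ)) * A ^ 2 / (k + 1) * expS (A ^ 2) := by
  rw [Finset.sum_range_succ']
  have e0 : ((((k + 2) - 0 - 1).factorial : ℝ) / ((Nat.factorial 0 : ℕ) : ℝ))
      * A ^ (2 * ((0:ℕ):ℤ) - ((k + 2 : ℕ) : ℤ))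
      = ((k + 1).factorial : ℝ) * A ^ (-((k + 2 : ℕ) : ℤ)) := by
    norm_num
  rw [e0, add_sub_cancel_right]
  have hterm : ∀ i ∈ Finset.range (k + 1),
      ((((k + 2) - (i + 1) - 1).factorial : ℝ) / (((i + 1).factorial : ℝ)))
        * A ^ (2 * (((i+1):ℕ):ℤ) - ((k + 2 : ℕ) : ℤ))
      ≤ (((k + 1).factorial : ℝ) * A ^ (-((k + 2 : ℕ) : ℤ)) * A ^ 2 / (k + 1))
          * ((A ^ 2) ^ i / i.factorial) := by
    intro i hi
    have hik : i ≤ k := by simpa using Nat.lt_succ_iff.1 (Finset.mem_range.1 hi)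
    have e1 : (k + 2) - (i + 1) - 1 = k - i := by omega
    have e2 : (2 * (((i+1):ℕ):ℤ) - ((k + 2 : ℕ) : ℤ)) = (2 * ((i:ℤ) + 1)) - ((k + 2 : ℕ) : ℤ) := by
      push_cast; ring
    rw [e1, e2]
    exact fterm_le hA k i hik
  have hnonneg : ∀ i ∈ Finset.range (k + 1),
      0 ≤ ((((k + 2) - (i + 1) - 1).factorial : ℝ) / (((i + 1).factorial : ℝ)))
        * A ^ (2 * (((i+1):ℕ):ℤ) - ((k + 2 : ℕ) : ℤ)) := by
    intro i _
    positivity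
  rw [abs_of_nonneg (Finset.sum_nonneg hnonneg)]
  calc ∑ i ∈ Finset.range (k + 1),
        ((((k + 2) - (i + 1) - 1).factorial : ℝ) / (((i + 1).factorial : ℝ)))
          * A ^ (2 * (((i+1):ℕ):ℤ) - ((k + 2 : ℕ) : ℤ))
      ≤ ∑ i ∈ Finset.range (k + 1),
        (((k + 1).factorial : ℝ) * A ^ (-((k + 2 : ℕ) : ℤ)) * A ^ 2 / (k + 1))
          * ((A ^ 2) ^ i / i.factorial) := Finset.sum_le_sum hterm
    _ = (((k + 1).factorial : ℝ) * A ^ (-((k + 2 : ℕ) : ℤ)) * A ^ 2 / (k + 1))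
          * ∑ i ∈ Finset.range (k + 1), ((A ^ 2) ^ i / (i.factorial : ℝ)) := by
        rw [Finset.mul_sum]
    _ ≤ (((k + 1).factorial : ℝ) * A ^ (-((k + 2 : ℕ) : ℤ)) * A ^ 2 / (k + 1)) * expS (A ^ 2) := by
        apply mul_le_mul_of_nonneg_left (sum_le_expS (by positivity) _) (by positivity)

lemma mterm_le {y : ℝ} (hy : 0 ≤ y) (m : ℕ) :
    (((m:ℝ) + 1) * y ^ m) / ((m.factorial : ℝ) * m.factorial) ≤ (2 * y) ^ m / m.factorial := by
  rw [mul_pow, div_le_div_iff₀ (by positivity) (by positivity)]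
  have h1 : ((m:ℝ) + 1) ≤ 2 ^ m := by exact_mod_cast Nat.lt_two_pow_self (n := m)
  have h2 : (1:ℝ) ≤ m.factorial := by
    exact_mod_cast Nat.one_le_iff_ne_zero.2 m.factorial_ne_zero
  have h3 : (0:ℝ) ≤ y ^ m := by positivity
  have key : ((m:ℝ) + 1) * (y ^ m * m.factorial) ≤ 2 ^ m * (y ^ m * m.factorial) :=
    mul_le_mul_of_nonneg_right h1 (by positivity)
  have key2 : (2:ℝ) ^ m * (y ^ m * m.factorial) * 1 ≤ 2 ^ m * (y ^ m * m.factorial) * m.factorial :=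
    mul_le_mul_of_nonneg_left h2 (by positivity)
  nlinarith [key, key2]

lemma yterm_le {A : ℝ} (hA : 0 < A) (n m : ℕ) :
    |((-1 : ℝ) ^ m * (psiNat m + psiNat (m + n)) /
        ((m.factorial : ℝ) * ((m + n).factorial : ℝ))) * A ^ (2 * m + n)|
      ≤ ((2 * |Real.eulerMascheroniConstant| + 2) * ((n:ℝ) + 1) * A ^ n / n.factorial)
          * ((2 * A ^ 2) ^ m / m.factorial) := by
  set γa := |Real.eulerMascheroniConstant| with hγ
  have hγ0 : 0 ≤ γa := abs_nonneg _
  have habs : |((-1 : ℝ) ^ m * (psiNat m + psiNat (m + n)) /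
        ((m.factorial : ℝ) * ((m + n).factorial : ℝ))) * A ^ (2 * m + n)|
      = |psiNat m + psiNat (m + n)| / ((m.factorial : ℝ) * ((m + n).factorial : ℝ))
          * A ^ (2 * m + n) := by
    rw [abs_mul, abs_div, abs_mul, abs_pow, abs_neg, abs_one, one_pow, one_mul,
      abs_of_pos (by positivity : (0:ℝ) < (m.factorial : ℝ) * ((m + n).factorial : ℝ)),
      abs_of_nonneg (by positivity : (0:ℝ) ≤ A ^ (2 * m + n))]
  have hψ : |psiNat m + psiNat (m + n)| ≤ (2 * γa + 2) * ((m:ℝ) + 1) * ((n:ℝ) + 1) := by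
    have h1 := psiNat_abs_le m
    have h2 := psiNat_abs_le (m + n)
    have h3 : |psiNat m + psiNat (m + n)| ≤ |psiNat m| + |psiNat (m + n)| := abs_add_le _ _
    have h4 : ((m + n : ℕ) : ℝ) = (m:ℝ) + n := by push_cast; ring
    rw [h4] at h2
    rw [← hγ] at h1 h2
    have hm : (0:ℝ) ≤ m := Nat.cast_nonneg m
    have hn : (0:ℝ) ≤ n := Nat.cast_nonneg n
    nlinarith [mul_nonneg hm hn, mul_nonneg hγ0 hm, mul_nonneg hγ0 hn,
      mul_nonneg hγ0 (mul_nonneg hm hn)]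
  have hD : (m.factorial : ℝ) * ((m.factorial : ℝ) * n.factorial)
      ≤ (m.factorial : ℝ) * ((m + n).factorial : ℝ) :=
    mul_le_mul_of_nonneg_left (fact_mul_fact_le m n) (by positivity)
  have hP : A ^ (2 * m + n) = (A ^ 2) ^ m * A ^ n := by
    rw [pow_add, pow_mul]
  rw [habs, hP]
  calc |psiNat m + psiNat (m + n)| / ((m.factorial : ℝ) * ((m + n).factorial : ℝ))
        * ((A ^ 2) ^ m * A ^ n)
      ≤ ((2 * γa + 2) * ((m:ℝ) + 1) * ((n:ℝ) + 1))
          / ((m.factorial : ℝ) * ((m.factorial : ℝ) * n.factorial))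
          * ((A ^ 2) ^ m * A ^ n) := by
        refine mul_le_mul_of_nonneg_right ?_ (by positivity)
        exact div_le_div₀ (by positivity) hψ (by positivity) hD
    _ = ((2 * γa + 2) * ((n:ℝ) + 1) * A ^ n / n.factorial)
          * ((((m:ℝ) + 1) * (A ^ 2) ^ m) / ((m.factorial : ℝ) * m.factorial)) := by
        field_simp
    _ ≤ ((2 * γa + 2) * ((n:ℝ) + 1) * A ^ n / n.factorial)
          * ((2 * A ^ 2) ^ m / m.factorial) := by
        apply mul_le_mul_of_nonneg_left (mterm_le (by positivity) m) (by positivity)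

lemma ytsum_summable {A : ℝ} (hA : 0 < A) (n : ℕ) :
    Summable (fun m : ℕ => ((-1 : ℝ) ^ m * (psiNat m + psiNat (m + n)) /
        ((m.factorial : ℝ) * ((m + n).factorial : ℝ))) * A ^ (2 * m + n)) := by
  have hb : Summable (fun m : ℕ =>
      ((2 * |Real.eulerMascheroniConstant| + 2) * ((n:ℝ) + 1) * A ^ n / n.factorial)
        * ((2 * A ^ 2) ^ m / m.factorial)) := (expS_summable (2 * A ^ 2)).mul_left _
  exact Summable.of_abs (Summable.of_nonneg_of_le (fun m => abs_nonneg _)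
    (fun m => yterm_le hA n m) hb)

lemma tsum_est {A : ℝ} (hA : 0 < A) (n : ℕ) :
    |∑' m : ℕ, ((-1 : ℝ) ^ m * (psiNat m + psiNat (m + n)) /
          ((m.factorial : ℝ) * ((m + n).factorial : ℝ))) * A ^ (2 * m + n)|
      ≤ ((2 * |Real.eulerMascheroniConstant| + 2) * ((n:ℝ) + 1) * A ^ n / n.factorial)
          * expS (2 * A ^ 2) := by
  have hb : Summable (fun m : ℕ =>
      ((2 * |Real.eulerMascheroniConstant| + 2) * ((n:ℝ) + 1) * A ^ n / n.factorial)
        * ((2 * A ^ 2) ^ m / m.factorial)) := (expS_summable (2 * A ^ 2)).mul_left _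
  have habs : Summable (fun m : ℕ => |((-1 : ℝ) ^ m * (psiNat m + psiNat (m + n)) /
        ((m.factorial : ℝ) * ((m + n).factorial : ℝ))) * A ^ (2 * m + n)|) :=
    Summable.of_nonneg_of_le (fun m => abs_nonneg _) (fun m => yterm_le hA n m) hb
  calc |∑' m : ℕ, ((-1 : ℝ) ^ m * (psiNat m + psiNat (m + n)) /
          ((m.factorial : ℝ) * ((m + n).factorial : ℝ))) * A ^ (2 * m + n)|
      ≤ ∑' m : ℕ, |((-1 : ℝ) ^ m * (psiNat m + psiNat (m + n)) /
          ((m.factorial : ℝ) * ((m + n).factorial : ℝ))) * A ^ (2 * m + n)| := abs_tsum_le' habs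
    _ ≤ ∑' m : ℕ, ((2 * |Real.eulerMascheroniConstant| + 2) * ((n:ℝ) + 1) * A ^ n / n.factorial)
          * ((2 * A ^ 2) ^ m / m.factorial) :=
        Summable.tsum_le_tsum (fun m => yterm_le hA n m) habs hb
    _ = ((2 * |Real.eulerMascheroniConstant| + 2) * ((n:ℝ) + 1) * A ^ n / n.factorial)
          * expS (2 * A ^ 2) := by rw [tsum_mul_left]; rfl

/-- Bessel function of the second kind of natural order `n`. -/
noncomputable def besselY (n : ℕ) (t : ℝ) : ℝ :=
  (2 / π) * Real.log (t / 2) * besselJ n t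
    - (1 / π) * ∑ m ∈ Finset.range n,
        (((n - m - 1).factorial : ℝ) / (m.factorial : ℝ)) * (t / 2) ^ ((2 * m : ℤ) - n)
    - (1 / π) * ∑' m : ℕ,
        ((-1 : ℝ) ^ m * (psiNat m + psiNat (m + n)) /
          ((m.factorial : ℝ) * ((m + n).factorial : ℝ))) * (t / 2) ^ (2 * m + n)

/-- Hankel function of the first kind of natural order `n`. -/
noncomputable def besselH (n : ℕ) (t : ℝ) : ℂ :=
  (besselJ n t : ℂ) + Complex.I * (besselY n t : ℂ)

set_option maxHeartbeats 1600000 in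
lemma Y_event (t : ℝ) (ht : 0 < t) :
    ∀ᶠ ν : ℕ in atTop,
      |π * besselY ν t + ((ν - 1).factorial : ℝ) / (t / 2) ^ ν|
        ≤ (((ν - 1).factorial : ℝ) / (t / 2) ^ ν) / 2 := by
  set A := t / 2 with hAdef
  have hA : 0 < A := by rw [hAdef]; linarith
  set γa := |Real.eulerMascheroniConstant| with hγ
  set C5 : ℝ := (2 * γa + 2) * expS (2 * A ^ 2) + 2 * |Real.log A| * expS (A ^ 2) with hC5
  have hEa : 0 ≤ expS (2 * A ^ 2) := expS_nonneg (by positivity)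
  have hEb : 0 ≤ expS (A ^ 2) := expS_nonneg (by positivity)
  have hγ0 : 0 ≤ γa := abs_nonneg _
  have hl0 : 0 ≤ |Real.log A| := abs_nonneg _
  have hC5nn : 0 ≤ C5 := by rw [hC5]; positivity
  have ev1 : ∀ᶠ ν : ℕ in atTop, A ^ 2 * expS (A ^ 2) / ((ν : ℝ) + -1) < 1 / 4 := by
    have hd : Tendsto (fun ν : ℕ => (ν : ℝ) + -1) atTop atTop :=
      tendsto_atTop_add_const_right atTop (-1) tendsto_natCast_atTop_atTop
    have hT : Tendsto (fun ν : ℕ => A ^ 2 * expS (A ^ 2) / ((ν : ℝ) + -1)) atTop (nhds 0) :=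
      Tendsto.div_atTop tendsto_const_nhds hd
    exact hT.eventually (gt_mem_nhds (by norm_num))
  have ev2 : ∀ᶠ ν : ℕ in atTop, 2 * C5 * ((2 * A ^ 2) ^ ν / (ν.factorial : ℝ)) < 1 / 4 := by
    have hT : Tendsto (fun ν : ℕ => 2 * C5 * ((2 * A ^ 2) ^ ν / (ν.factorial : ℝ)))
        atTop (nhds (2 * C5 * 0)) :=
      (Real.summable_pow_div_factorial (2 * A ^ 2)).tendsto_atTop_zero.const_mul (2 * C5)
    rw [mul_zero] at hT
    exact hT.eventually (gt_mem_nhds (by norm_num))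
  filter_upwards [ev1, ev2, eventually_ge_atTop 2] with ν h1 h2 hν
  obtain ⟨k, rfl⟩ : ∃ k, ν = k + 2 := ⟨ν - 2, by omega⟩
  have hπ : (0 : ℝ) < π := Real.pi_pos
  have hsub : (k + 2) - 1 = k + 1 := by omega
  rw [hsub]
  set P : ℝ := A ^ (k + 2) with hP
  have hPpos : 0 < P := by rw [hP]; positivity
  set R : ℝ := ((k + 1).factorial : ℝ) with hR
  have hRpos : 0 < R := by rw [hR]; exact_mod_cast (k + 1).factorial_pos
  set Q : ℝ := ((k + 2).factorial : ℝ) with hQ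
  have hQpos : 0 < Q := by rw [hQ]; exact_mod_cast (k + 2).factorial_pos
  set Fs : ℝ := ∑ m ∈ Finset.range (k + 2),
      ((((k + 2) - m - 1).factorial : ℝ) / (m.factorial : ℝ))
        * A ^ (2 * (m:ℤ) - ((k + 2 : ℕ) : ℤ)) with hFs
  set Ts : ℝ := ∑' m : ℕ,
      ((-1 : ℝ) ^ m * (psiNat m + psiNat (m + (k + 2))) /
        ((m.factorial : ℝ) * ((m + (k + 2)).factorial : ℝ))) * A ^ (2 * m + (k + 2)) with hTs
  have hYexp : π * besselY (k + 2) t = 2 * Real.log A * besselJ (k + 2) t - Fs - Ts := by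
    rw [besselY, hFs, hTs, ← hAdef]
    field_simp
  have hzp : A ^ (-((k + 2 : ℕ) : ℤ)) = P⁻¹ := by
    rw [zpow_neg, zpow_natCast, hP]
  have hF := finite_sum_est hA k
  rw [← hFs, hzp] at hF
  have hT := tsum_est hA (k + 2)
  rw [← hTs, ← hγ] at hT
  have hJb := besselJ_abs_le (k + 2) (le_of_lt ht)
  rw [← hAdef] at hJb
  have hlog : |2 * Real.log A * besselJ (k + 2) t|
      ≤ 2 * |Real.log A| * (P / Q * expS (A ^ 2)) := by
    rw [abs_mul, abs_mul, abs_of_pos (by norm_num : (0:ℝ) < 2)]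
    have : |besselJ (k + 2) t| ≤ P / Q * expS (A ^ 2) := by
      rw [hP, hQ]; exact hJb
    exact mul_le_mul_of_nonneg_left this (by positivity)
  have hT' : |Ts| ≤ (2 * γa + 2) * (((k + 2 : ℕ) : ℝ) + 1) * P / Q * expS (2 * A ^ 2) := by
    rw [hP, hQ]; exact hT
  have hkey : |π * besselY (k + 2) t + R / P|
      ≤ R * P⁻¹ * A ^ 2 / ((k:ℝ) + 1) * expS (A ^ 2)
        + (2 * |Real.log A| * (P / Q * expS (A ^ 2))
            + (2 * γa + 2) * (((k + 2 : ℕ) : ℝ) + 1) * P / Q * expS (2 * A ^ 2)) := by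
    have e1 : π * besselY (k + 2) t + R / P
        = (Fs - R * P⁻¹) * (-1) + (2 * Real.log A * besselJ (k + 2) t - Ts) := by
      rw [hYexp]
      have : R / P = R * P⁻¹ := div_eq_mul_inv _ _
      rw [this]; ring
    rw [e1]
    refine (abs_add_le _ _).trans ?_
    rw [abs_mul, abs_neg, abs_one, mul_one]
    refine add_le_add hF ((abs_sub _ _).trans (add_le_add hlog hT'))
  have hb1 : R * P⁻¹ * A ^ 2 / ((k:ℝ) + 1) * expS (A ^ 2) ≤ (R / P) / 4 := by
    have h1' : A ^ 2 * expS (A ^ 2) / ((k:ℝ) + 1) ≤ 1 / 4 := by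
      have e : (((k + 2 : ℕ) : ℝ) + -1) = (k:ℝ) + 1 := by push_cast; ring
      rw [e] at h1
      linarith
    have e2 : R * P⁻¹ * A ^ 2 / ((k:ℝ) + 1) * expS (A ^ 2)
        = (R / P) * (A ^ 2 * expS (A ^ 2) / ((k:ℝ) + 1)) := by
      rw [div_eq_mul_inv R P]
      ring
    rw [e2]
    calc (R / P) * (A ^ 2 * expS (A ^ 2) / ((k:ℝ) + 1)) ≤ (R / P) * (1 / 4) :=
          mul_le_mul_of_nonneg_left h1' (le_of_lt (div_pos hRpos hPpos))
      _ = (R / P) / 4 := by ring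
  have hb2 : 2 * |Real.log A| * (P / Q * expS (A ^ 2))
        + (2 * γa + 2) * (((k + 2 : ℕ) : ℝ) + 1) * P / Q * expS (2 * A ^ 2)
      ≤ (R / P) / 4 := by
    have hk3 : (1:ℝ) ≤ (k:ℝ) + 3 := by
      have := (Nat.cast_nonneg k : (0:ℝ) ≤ k); linarith
    have e2 : (((k + 2 : ℕ) : ℝ) + 1) = (k:ℝ) + 3 := by push_cast; ring
    have t2 : 2 * |Real.log A| * (P / Q * expS (A ^ 2))
        ≤ (2 * |Real.log A| * expS (A ^ 2)) * ((k:ℝ) + 3) * (P / Q) := by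
      calc 2 * |Real.log A| * (P / Q * expS (A ^ 2))
          = (2 * |Real.log A| * expS (A ^ 2)) * (P / Q) := by ring
        _ ≤ (2 * |Real.log A| * expS (A ^ 2)) * (((k:ℝ) + 3) * (P / Q)) := by
            refine mul_le_mul_of_nonneg_left ?_ (by positivity)
            exact le_mul_of_one_le_left (le_of_lt (div_pos hPpos hQpos)) hk3
        _ = (2 * |Real.log A| * expS (A ^ 2)) * ((k:ℝ) + 3) * (P / Q) := by ring
    have hstep : 2 * |Real.log A| * (P / Q * expS (A ^ 2))
        + (2 * γa + 2) * (((k + 2 : ℕ) : ℝ) + 1) * P / Q * expS (2 * A ^ 2)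
        ≤ C5 * ((k:ℝ) + 3) * P / Q := by
      have eC : C5 * ((k:ℝ) + 3) * P / Q
          = (2 * γa + 2) * ((k:ℝ) + 3) * P / Q * expS (2 * A ^ 2)
            + (2 * |Real.log A| * expS (A ^ 2)) * ((k:ℝ) + 3) * (P / Q) := by
        rw [hC5]; ring
      rw [e2, eC]
      linarith [t2]
    refine hstep.trans ?_
    have hpow : (2 * A ^ 2) ^ (k + 2) = 2 ^ (k + 2) * P ^ 2 := by
      rw [mul_pow, hP, ← pow_mul, ← pow_mul]
      ring_nf
    have hk32 : ((k:ℝ) + 3) ≤ 2 ^ (k + 2) * R := by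
      have hn1 : (k + 3 : ℕ) ≤ 2 ^ (k + 2) := Nat.lt_two_pow_self (n := k + 2)
      have hn2 : (2:ℕ) ^ (k + 2) ≤ 2 ^ (k + 2) * (k + 1).factorial :=
        Nat.le_mul_of_pos_right _ (k + 1).factorial_pos
      rw [hR]
      exact_mod_cast hn1.trans hn2
    have erhs : 2 * C5 * ((2 * A ^ 2) ^ (k + 2) / Q) * R
        = (2 * C5 * 2 ^ (k + 2) * P ^ 2 * R) / Q := by
      rw [hpow]; ring
    have key : C5 * ((k:ℝ) + 3) * P / Q * P ≤ 2 * C5 * ((2 * A ^ 2) ^ (k + 2) / Q) * R := by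
      rw [erhs, div_mul_eq_mul_div, div_le_div_iff₀ hQpos hQpos]
      have i1 : C5 * ((k:ℝ) + 3) ≤ C5 * (2 ^ (k + 2) * R) :=
        mul_le_mul_of_nonneg_left hk32 hC5nn
      have i2 : C5 * ((k:ℝ) + 3) * (P * P) ≤ C5 * (2 ^ (k + 2) * R) * (P * P) :=
        mul_le_mul_of_nonneg_right i1 (mul_nonneg hPpos.le hPpos.le)
      have i3 : (0:ℝ) ≤ C5 * 2 ^ (k + 2) * P ^ 2 * R :=
        mul_nonneg (mul_nonneg (mul_nonneg hC5nn (by norm_num)) (pow_nonneg hPpos.le 2)) hRpos.le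
      nlinarith [i2, i3, hQpos]
    have h2' : 2 * C5 * ((2 * A ^ 2) ^ (k + 2) / Q) < 1 / 4 := by
      rw [hQ]; exact h2
    have hfin : C5 * ((k:ℝ) + 3) * P / Q * P ≤ (1 / 4) * R := by
      have : 2 * C5 * ((2 * A ^ 2) ^ (k + 2) / Q) * R ≤ (1 / 4) * R :=
        mul_le_mul_of_nonneg_right (le_of_lt h2') (le_of_lt hRpos)
      linarith [key]
    have efrac : C5 * ((k:ℝ) + 3) * P / Q = (C5 * ((k:ℝ) + 3) * P / Q * P) / P :=
      (mul_div_cancel_right₀ _ hPpos.ne').symm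
    rw [efrac]
    calc (C5 * ((k:ℝ) + 3) * P / Q * P) / P ≤ ((1 / 4) * R) / P :=
          (div_le_div_iff_of_pos_right hPpos).2 hfin
      _ = (R / P) / 4 := by ring
  calc |π * besselY (k + 2) t + R / P|
      ≤ R * P⁻¹ * A ^ 2 / ((k:ℝ) + 1) * expS (A ^ 2)
        + (2 * |Real.log A| * (P / Q * expS (A ^ 2))
            + (2 * γa + 2) * (((k + 2 : ℕ) : ℝ) + 1) * P / Q * expS (2 * A ^ 2)) := hkey
    _ ≤ (R / P) / 4 + (R / P) / 4 := add_le_add hb1 hb2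
    _ = (R / P) / 2 := by ring

lemma J_event (x : ℝ) (hx : 0 ≤ x) :
    ∀ᶠ ν : ℕ in atTop,
      |besselJ ν x - (x / 2) ^ ν / (ν.factorial : ℝ)| ≤ ((x / 2) ^ ν / (ν.factorial : ℝ)) / 2 := by
  set c := x / 2 with hc
  have hc0 : 0 ≤ c := by rw [hc]; linarith
  have ev : ∀ᶠ ν : ℕ in atTop, c ^ 2 * expS (c ^ 2) / ((ν : ℝ) + 1) < 1 / 2 := by
    have hd : Tendsto (fun ν : ℕ => (ν : ℝ) + 1) atTop atTop :=
      tendsto_atTop_add_const_right atTop 1 tendsto_natCast_atTop_atTop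
    exact (Tendsto.div_atTop tendsto_const_nhds hd).eventually (gt_mem_nhds (by norm_num))
  filter_upwards [ev] with ν hν
  have hb := besselJ_sub_main ν hx
  rw [← hc] at hb
  have hfne : ((ν.factorial : ℝ)) ≠ 0 := by exact_mod_cast ν.factorial_ne_zero
  have hν1 : ((ν : ℝ) + 1) ≠ 0 := by positivity
  have heq : c ^ (ν + 2) / (((ν + 1).factorial) : ℝ) * expS (c ^ 2)
      = (c ^ ν / (ν.factorial : ℝ)) * (c ^ 2 * expS (c ^ 2) / ((ν : ℝ) + 1)) := by
    have hfs : (((ν + 1).factorial) : ℝ) = ((ν : ℝ) + 1) * (ν.factorial : ℝ) := by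
      exact_mod_cast Nat.factorial_succ ν
    rw [hfs, pow_add]
    field_simp
  rw [heq] at hb
  refine hb.trans ?_
  have h0 : 0 ≤ c ^ ν / (ν.factorial : ℝ) := by positivity
  calc (c ^ ν / (ν.factorial : ℝ)) * (c ^ 2 * expS (c ^ 2) / ((ν : ℝ) + 1))
      ≤ (c ^ ν / (ν.factorial : ℝ)) * (1 / 2) := mul_le_mul_of_nonneg_left (le_of_lt hν) h0
    _ = (c ^ ν / (ν.factorial : ℝ)) / 2 := by ring

lemma H_event (t : ℝ) (ht : 0 < t) :
    ∀ᶠ ν : ℕ in atTop,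
      ((((ν - 1).factorial : ℝ) / (t / 2) ^ ν) / (2 * π) ≤ ‖besselH ν t‖)
      ∧ ‖besselH ν t‖ ≤ 2 * (((ν - 1).factorial : ℝ) / (t / 2) ^ ν) / π := by
  have hA : 0 < t / 2 := by linarith
  have hπ : (0 : ℝ) < π := Real.pi_pos
  have evsmall : ∀ᶠ ν : ℕ in atTop, 3 * π * (((t / 2) ^ 2) ^ ν / (ν.factorial : ℝ)) < 1 := by
    have hT : Tendsto (fun ν : ℕ => 3 * π * (((t / 2) ^ 2) ^ ν / (ν.factorial : ℝ)))
        atTop (nhds (3 * π * 0)) :=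
      (Real.summable_pow_div_factorial ((t / 2) ^ 2)).tendsto_atTop_zero.const_mul (3 * π)
    rw [mul_zero] at hT
    exact hT.eventually (gt_mem_nhds (by norm_num))
  filter_upwards [Y_event t ht, J_event t ht.le, evsmall, eventually_ge_atTop 1]
    with ν hY hJ hsm hν1
  set A := t / 2 with hAdef
  set L : ℝ := ((ν - 1).factorial : ℝ) / A ^ ν with hL
  have hLpos : 0 < L := by
    rw [hL]
    apply div_pos _ (by positivity)
    exact_mod_cast (ν - 1).factorial_pos
  set b : ℝ := A ^ ν / (ν.factorial : ℝ) with hb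
  have hbpos : 0 < b := by
    rw [hb]
    apply div_pos (by positivity)
    exact_mod_cast ν.factorial_pos
  have hπν : (0:ℝ) < A ^ ν := pow_pos hA ν
  -- |J| ≤ 3b/2
  have hJub : |besselJ ν t| ≤ 3 / 2 * b := by
    have h1 : |besselJ ν t| - |b| ≤ |besselJ ν t - b| := abs_sub_abs_le_abs_sub _ _
    rw [abs_of_pos hbpos] at h1
    linarith [hJ]
  -- 3/2 b ≤ L/(2π)
  have hbL : 3 / 2 * b ≤ L / (2 * π) := by
    have hfge1 : (1 : ℝ) ≤ ((ν - 1).factorial : ℝ) := by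
      exact_mod_cast Nat.one_le_iff_ne_zero.2 (ν - 1).factorial_ne_zero
    have e1 : (A ^ 2) ^ ν = A ^ ν * A ^ ν := by
      rw [← pow_mul, two_mul, pow_add]
    have h4 : 3 * π * (A ^ ν * A ^ ν / (ν.factorial : ℝ)) ≤ 1 := by
      rw [← e1]; exact le_of_lt hsm
    have hfne : ((ν.factorial : ℝ)) ≠ 0 := by exact_mod_cast ν.factorial_ne_zero
    rw [le_div_iff₀ (by positivity : (0:ℝ) < 2 * π), hL, le_div_iff₀ hπν, hb]
    have e : 3 / 2 * (A ^ ν / (ν.factorial : ℝ)) * (2 * π) * A ^ ν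
        = 3 * π * (A ^ ν * A ^ ν / (ν.factorial : ℝ)) := by
      field_simp
    rw [e]
    linarith
  -- |Y| bounds
  have hπY_lb : L / 2 ≤ |π * besselY ν t| := by
    have htri : L ≤ |π * besselY ν t + L| + |π * besselY ν t| := by
      calc L = |L| := (abs_of_pos hLpos).symm
        _ = |(π * besselY ν t + L) + (-(π * besselY ν t))| := by
            rw [show (π * besselY ν t + L) + (-(π * besselY ν t)) = L by ring]
        _ ≤ |π * besselY ν t + L| + |(-(π * besselY ν t))| := abs_add_le _ _
        _ = |π * besselY ν t + L| + |π * besselY ν t| := by rw [abs_neg]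
    linarith [hY]
  have hπY_ub : |π * besselY ν t| ≤ 3 / 2 * L := by
    calc |π * besselY ν t| = |(π * besselY ν t + L) + (-L)| := by
          rw [show (π * besselY ν t + L) + (-L) = π * besselY ν t by ring]
      _ ≤ |π * besselY ν t + L| + |(-L)| := abs_add_le _ _
      _ = |π * besselY ν t + L| + L := by rw [abs_neg, abs_of_pos hLpos]
      _ ≤ L / 2 + L := by linarith [hY]
      _ = 3 / 2 * L := by ring
  have hYabs : |besselY ν t| = |π * besselY ν t| / π := by
    rw [abs_mul, abs_of_pos hπ]
    field_simp
  have him : (besselH ν t).im = besselY ν t := by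
    simp [besselH]
  constructor
  · calc L / (2 * π) ≤ |besselY ν t| := by
          rw [hYabs, div_le_div_iff₀ (by positivity : (0:ℝ) < 2 * π) hπ]
          nlinarith [hπY_lb, hπ]
      _ = |(besselH ν t).im| := by rw [him]
      _ ≤ ‖besselH ν t‖ := Complex.abs_im_le_norm _
  · calc ‖besselH ν t‖
        ≤ ‖(besselJ ν t : ℂ)‖ + ‖Complex.I * (besselY ν t : ℂ)‖ := by
          rw [besselH]; exact norm_add_le _ _
      _ = |besselJ ν t| + |besselY ν t| := by
          rw [norm_mul, Complex.norm_I, one_mul, Complex.norm_real, Complex.norm_real, Real.norm_eq_abs, Real.norm_eq_abs]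
      _ ≤ L / (2 * π) + 3 / 2 * L / π := by
          have l1 : |besselJ ν t| ≤ L / (2 * π) := hJub.trans hbL
          have l2 : |besselY ν t| ≤ 3 / 2 * L / π := by
            rw [hYabs]
            exact (div_le_div_iff_of_pos_right hπ).2 hπY_ub
          linarith
      _ = 2 * L / π := by
          field_simp
          ring

lemma key_alg (s t : ℝ) (ht : 0 < t) {ν : ℕ} (hν : 1 ≤ ν) :
    ((s / 2) ^ ν / (ν.factorial : ℝ)) ^ 2 * (((ν - 1).factorial : ℝ) / (t / 2) ^ ν)
      / ((t / 2) ^ ν / (ν.factorial : ℝ))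
      = ((s / t) ^ 2) ^ ν / ν := by
  obtain ⟨k, rfl⟩ : ∃ k, ν = k + 1 := ⟨ν - 1, by omega⟩
  have hsub : (k + 1) - 1 = k := rfl
  rw [hsub]
  have hfac : ((k + 1).factorial : ℝ) = ((k : ℝ) + 1) * k.factorial := by
    exact_mod_cast Nat.factorial_succ k
  have htne : (t : ℝ) ≠ 0 := ht.ne'
  have hkf : ((k.factorial : ℝ)) ≠ 0 := by exact_mod_cast k.factorial_ne_zero
  have hk1 : ((k : ℝ) + 1) ≠ 0 := by positivity
  rw [hfac]
  push_cast
  simp only [div_pow, ← pow_mul]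
  field_simp
  ring

/-- Picard-series criterion for a sound-soft disk: for `t > 0`, `s ≥ 0` and `J_n(t) ≠ 0`
for all `n`, the series `∑_{n=1}^∞ J_n(s)² |H_n(t)| / |J_n(t)|` converges iff `s < t`. -/
theorem picard_series_summable_iff (t s : ℝ) (ht : 0 < t) (hs : 0 ≤ s)
    (hJ : ∀ n : ℕ, besselJ n t ≠ 0) :
    Summable (fun n : ℕ =>
        besselJ (n + 1) s ^ 2 * ‖besselH (n + 1) t‖ / |besselJ (n + 1) t|)
      ↔ s < t := by
  have hπ : (0 : ℝ) < π := Real.pi_pos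
  set r : ℝ := (s / t) ^ 2 with hr
  have hr0 : 0 ≤ r := sq_nonneg _
  set F : ℕ → ℝ := fun ν => besselJ ν s ^ 2 * ‖besselH ν t‖ / |besselJ ν t| with hF
  have hGeq : (fun n : ℕ =>
      besselJ (n + 1) s ^ 2 * ‖besselH (n + 1) t‖ / |besselJ (n + 1) t|)
      = fun n => F (n + 1) := rfl
  have hFnonneg : ∀ ν, 0 ≤ F ν := fun ν =>
    div_nonneg (mul_nonneg (sq_nonneg _) (norm_nonneg _)) (abs_nonneg _)
  have main : ∀ᶠ ν : ℕ in atTop,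
      (1 / (12 * π)) * (r ^ ν / ν) ≤ F ν ∧ F ν ≤ (18 / π) * (r ^ ν / ν) := by
    filter_upwards [J_event s hs, J_event t ht.le, H_event t ht, eventually_ge_atTop 1]
      with ν hJs hJt hH hν1
    set a : ℝ := (s / 2) ^ ν / (ν.factorial : ℝ) with ha
    set b : ℝ := (t / 2) ^ ν / (ν.factorial : ℝ) with hb
    set L : ℝ := ((ν - 1).factorial : ℝ) / (t / 2) ^ ν with hL
    have hfpos : (0:ℝ) < (ν.factorial : ℝ) := by exact_mod_cast ν.factorial_pos
    have ha0 : 0 ≤ a := by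
      rw [ha]
      exact div_nonneg (by positivity) hfpos.le
    have hbpos : 0 < b := by
      rw [hb]
      exact div_pos (by positivity) hfpos
    have hLpos : 0 < L := by
      rw [hL]
      apply div_pos _ (by positivity)
      exact_mod_cast (ν - 1).factorial_pos
    have hJs' : a / 2 ≤ besselJ ν s ∧ besselJ ν s ≤ 3 / 2 * a := by
      have h := abs_le.1 hJs
      constructor <;> linarith [h.1, h.2]
    have hsq_ub : besselJ ν s ^ 2 ≤ (3 / 2 * a) ^ 2 := by
      have h1 : |besselJ ν s| ≤ 3 / 2 * a := by
        rw [abs_le]; constructor <;> linarith [hJs'.1, hJs'.2]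
      calc besselJ ν s ^ 2 = |besselJ ν s| ^ 2 := (sq_abs _).symm
        _ ≤ (3 / 2 * a) ^ 2 := pow_le_pow_left₀ (abs_nonneg _) h1 2
    have hsq_lb : (a / 2) ^ 2 ≤ besselJ ν s ^ 2 :=
      pow_le_pow_left₀ (by linarith) hJs'.1 2
    have hJt' : b / 2 ≤ |besselJ ν t| ∧ |besselJ ν t| ≤ 3 / 2 * b := by
      have h1 : |besselJ ν t| - |b| ≤ |besselJ ν t - b| := abs_sub_abs_le_abs_sub _ _
      have h2 : |b| - |besselJ ν t| ≤ |b - besselJ ν t| := abs_sub_abs_le_abs_sub _ _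
      rw [abs_sub_comm] at h2
      rw [abs_of_pos hbpos] at h1 h2
      constructor <;> linarith [hJt]
    have hJtpos : 0 < |besselJ ν t| := lt_of_lt_of_le (by linarith) hJt'.1
    have e2 : a ^ 2 * L / b = r ^ ν / ν := by
      rw [ha, hb, hL, hr]
      exact key_alg s t ht hν1
    have hFν : F ν = besselJ ν s ^ 2 * ‖besselH ν t‖ / |besselJ ν t| := rfl
    constructor
    · -- lower bound
      have hnum2 : (a / 2) ^ 2 * (L / (2 * π)) ≤ besselJ ν s ^ 2 * ‖besselH ν t‖ :=
        mul_le_mul hsq_lb hH.1 (by positivity) (sq_nonneg _)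
      have hdiv2 : ((a / 2) ^ 2 * (L / (2 * π))) / (3 / 2 * b)
          ≤ besselJ ν s ^ 2 * ‖besselH ν t‖ / |besselJ ν t| :=
        div_le_div₀ (mul_nonneg (sq_nonneg _) (norm_nonneg _)) hnum2 hJtpos hJt'.2
      have e3 : ((a / 2) ^ 2 * (L / (2 * π))) / (3 / 2 * b)
          = (1 / (12 * π)) * (a ^ 2 * L / b) := by
        field_simp
        ring
      rw [hFν]
      calc (1 / (12 * π)) * (r ^ ν / ν) = (1 / (12 * π)) * (a ^ 2 * L / b) := by rw [e2]
        _ = ((a / 2) ^ 2 * (L / (2 * π))) / (3 / 2 * b) := e3.symm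
        _ ≤ _ := hdiv2
    · -- upper bound
      have hnum : besselJ ν s ^ 2 * ‖besselH ν t‖
          ≤ (3 / 2 * a) ^ 2 * (2 * L / π) :=
        mul_le_mul hsq_ub hH.2 (norm_nonneg _) (by positivity)
      have hdiv : besselJ ν s ^ 2 * ‖besselH ν t‖ / |besselJ ν t|
          ≤ ((3 / 2 * a) ^ 2 * (2 * L / π)) / (b / 2) :=
        div_le_div₀ (by positivity) hnum (by linarith) hJt'.1
      have e1 : ((3 / 2 * a) ^ 2 * (2 * L / π)) / (b / 2) = (9 / π) * (a ^ 2 * L / b) := by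
        field_simp
        ring
      rw [hFν]
      refine hdiv.trans ?_
      rw [e1, e2]
      have h9 : (9:ℝ) / π ≤ 18 / π := by
        apply (div_le_div_iff_of_pos_right hπ).2
        norm_num
      apply mul_le_mul_of_nonneg_right h9
      positivity
  constructor
  · intro hsum
    by_contra hlt
    push_neg at hlt
    have hr1 : 1 ≤ r := by
      rw [hr]
      have h1 : 1 ≤ s / t := (one_le_div ht).2 hlt
      nlinarith
    have main' := (tendsto_add_atTop_nat 1).eventually main
    have hsum' : Summable (fun n : ℕ => F (n + 1)) := by rwa [hGeq] at hsum
    have hbig : (fun n : ℕ => (1 / (12 * π)) * (1 / ((n:ℝ) + 1)))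
        =O[atTop] (fun n => F (n + 1)) := by
      rw [Asymptotics.isBigO_iff]
      refine ⟨1, ?_⟩
      filter_upwards [main'] with n hn
      have hpow : (1:ℝ) ≤ r ^ (n + 1) := by
        calc (1:ℝ) = 1 ^ (n + 1) := (one_pow _).symm
          _ ≤ r ^ (n + 1) := pow_le_pow_left₀ (by norm_num) hr1 _
      have hcast : (((n + 1 : ℕ)):ℝ) = (n:ℝ) + 1 := by push_cast; ring
      have h1 : (1 / (12 * π)) * (1 / ((n:ℝ) + 1)) ≤ F (n + 1) := by
        refine le_trans ?_ hn.1
        rw [hcast]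
        refine mul_le_mul_of_nonneg_left ?_ (by positivity)
        exact (div_le_div_iff_of_pos_right (by positivity)).2 hpow
      rw [Real.norm_eq_abs, Real.norm_eq_abs, one_mul,
        abs_of_nonneg (by positivity), abs_of_nonneg (hFnonneg _)]
      exact h1
    have hsum2 : Summable (fun n : ℕ => (1 / (12 * π)) * (1 / ((n:ℝ) + 1))) :=
      summable_of_isBigO_nat hsum' hbig
    have hsum3 : Summable (fun n : ℕ => (1 / ((n:ℝ) + 1))) := by
      have h := hsum2.mul_left (12 * π)
      refine (summable_congr fun n => ?_).1 h
      field_simp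
    have hsum4 : Summable (fun n : ℕ => 1 / (((n + 1 : ℕ)):ℝ)) := by
      simpa using hsum3
    have hsum5 : Summable (fun n : ℕ => 1 / (n:ℝ)) :=
      (summable_nat_add_iff 1).1 hsum4
    exact not_summable_one_div_natCast hsum5
  · intro hst
    have hrlt : r < 1 := by
      rw [hr]
      have h0 : 0 ≤ s / t := div_nonneg hs ht.le
      have h1 : s / t < 1 := (div_lt_one ht).2 hst
      nlinarith
    rw [hGeq]
    apply summable_of_isBigO_nat (summable_geometric_of_lt_one hr0 hrlt)
    rw [Asymptotics.isBigO_iff]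
    refine ⟨18 / π, ?_⟩
    filter_upwards [(tendsto_add_atTop_nat 1).eventually main] with n hn
    have h1 : F (n + 1) ≤ (18 / π) * r ^ n := by
      refine hn.2.trans ?_
      have hcast : (((n + 1 : ℕ)):ℝ) = (n:ℝ) + 1 := by push_cast; ring
      have e : r ^ (n + 1) / (((n + 1 : ℕ)):ℝ) ≤ r ^ n := by
        rw [hcast]
        calc r ^ (n + 1) / ((n:ℝ) + 1) ≤ r ^ (n + 1) := by
              apply div_le_self (by positivity)
              have : (0:ℝ) ≤ (n:ℝ) := Nat.cast_nonneg n
              linarith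
          _ ≤ r ^ n := pow_le_pow_of_le_one hr0 hrlt.le (by omega)
      exact mul_le_mul_of_nonneg_left e (by positivity)
    rw [Real.norm_eq_abs, Real.norm_eq_abs, abs_of_nonneg (hFnonneg _),
      abs_of_nonneg (pow_nonneg hr0 n)]
    exact h1
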